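/- arXiv:1903.05534 — 10 statements merged into one kernel-verified Lean document; each statement's English description precedes it below -/
import Mathlib

section
/- In a symmetric friend-oriented hedonic game, every core stable partition is individually stable. -/
open Finset

section HedonicDefs

variable {α : Type*} [DecidableEq α] [Fintype α]

/-- Additive utility of player `i` in coalition `S`. -/
def util (w : α → α → ℤ) (S : Finset α) (i : α) : ℤ := ∑ j ∈ S, w i j

/-- `π` is a partition of the player set `V`: every player of `V` lies in its own
coalition, coalitions are contained in `V`, and membership determines the coalition. -/
def IsPartition (V : Finset α) (π : α → Finset α) : Prop :=
  (∀ i ∈ V, i ∈ π i ∧ π i ⊆ V) ∧ ∀ i ∈ V, ∀ j ∈ π i, π j = π i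

/-- `S` is a coalition of the partition `π` on `V`, or the empty coalition. -/
def IsCoalitionOf (V : Finset α) (π : α → Finset α) (S : Finset α) : Prop :=
  S = ∅ ∨ ∃ j ∈ V, S = π j

/-- Player `i` has an NS-deviation from `π i` to `S`. -/
def NSDev (w : α → α → ℤ) (V : Finset α) (π : α → Finset α) (i : α) (S : Finset α) : Prop :=
  IsCoalitionOf V π S ∧ S ≠ π i ∧ i ∉ S ∧ util w (π i) i < util w (insert i S) i

/-- Player `i` has an IS-deviation from `π i` to `S`: an NS-deviation accepted by
all members of the target coalition `S`. -/
def ISDev (w : α → α → ℤ) (V : Finset α) (π : α → Finset α) (i : α) (S : Finset α) : Prop :=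
  NSDev w V π i S ∧ ∀ j ∈ S, util w S j ≤ util w (insert i S) j

/-- Player `i` has a CIS-deviation from `π i` to `S`: an IS-deviation also accepted by
all members of the abandoned coalition. -/
def CISDev (w : α → α → ℤ) (V : Finset α) (π : α → Finset α) (i : α) (S : Finset α) : Prop :=
  ISDev w V π i S ∧ ∀ j ∈ (π i).erase i, util w (π i) j ≤ util w ((π i).erase i) j

def NashStable (w : α → α → ℤ) (V : Finset α) (π : α → Finset α) : Prop :=
  ∀ i ∈ V, ∀ S : Finset α, ¬ NSDev w V π i S

def IndStable (w : α → α → ℤ) (V : Finset α) (π : α → Finset α) : Prop :=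
  ∀ i ∈ V, ∀ S : Finset α, ¬ ISDev w V π i S

def CIStable (w : α → α → ℤ) (V : Finset α) (π : α → Finset α) : Prop :=
  ∀ i ∈ V, ∀ S : Finset α, ¬ CISDev w V π i S

/-- Individual rationality: each player weakly prefers its coalition to being alone
(being alone gives utility `w i i = 0`). -/
def IndRational (w : α → α → ℤ) (V : Finset α) (π : α → Finset α) : Prop :=
  ∀ i ∈ V, 0 ≤ util w (π i) i

/-- Core stability: no nonempty coalition strongly blocks `π`. -/
def CoreStable (w : α → α → ℤ) (V : Finset α) (π : α → Finset α) : Prop :=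
  ¬ ∃ S : Finset α, S ⊆ V ∧ S.Nonempty ∧ ∀ i ∈ S, util w (π i) i < util w S i

/-- `π` is robust for the stability notion `St` under deletion of at most `k` players:
`π` satisfies `St` and so does its truncation after removing any `X` with `|X| ≤ k`. -/
def Robust (St : Finset α → (α → Finset α) → Prop) (V : Finset α)
    (π : α → Finset α) (k : ℕ) : Prop :=
  St V π ∧ ∀ X ⊆ V, X.card ≤ k → St (V \ X) (fun i => π i \ X)

/-- Symmetric friend-oriented game: symmetric weights, zero on the diagonal, and each
off-diagonal weight equals `n` (friends) or `-1` (enemies), where `n` is the number of players. -/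
def FriendOriented (w : α → α → ℤ) : Prop :=
  (∀ i j : α, w i j = w j i) ∧ (∀ i : α, w i i = 0) ∧
    ∀ i j : α, i ≠ j → w i j = (Fintype.card α : ℤ) ∨ w i j = -1

/-- `j` is a friend of `i`. -/
def Friend (w : α → α → ℤ) (i j : α) : Prop := i ≠ j ∧ 0 < w i j


instance (w : α → α → ℤ) (i j : α) : Decidable (Friend w i j) :=
  inferInstanceAs (Decidable (_ ∧ _))

/-- `S` is a clique of the friendship graph. -/
def IsClique (w : α → α → ℤ) (S : Finset α) : Prop :=
  ∀ i ∈ S, ∀ j ∈ S, i ≠ j → Friend w i j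

/-- Two players lie in the same connected component of the friendship graph. -/
def SameComp (w : α → α → ℤ) : α → α → Prop :=
  Relation.ReflTransGen (fun a b => Friend w a b)

/-- The connected component of `v` in the friendship graph, as a set. -/
def comp (w : α → α → ℤ) (v : α) : Set α := {u | SameComp w v u}

end HedonicDefs
/-- In a symmetric friend-oriented hedonic game, every core stable
partition is individually stable. -/
theorem core_stable_imp_ind_stable {α : Type*} [DecidableEq α] [Fintype α]
    (w : α → α → ℤ) (hw : FriendOriented w) (π : α → Finset α)
    (hπ : IsPartition (Finset.univ : Finset α) π)
    (hcore : CoreStable w Finset.univ π) :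
    IndStable w Finset.univ π := by
  intro i hi S hdev
  obtain ⟨⟨hco, hne, hiS, hlt⟩, hacc⟩ := hdev
  rcases eq_or_ne S ∅ with rfl | hSne
  · apply hcore
    refine ⟨{i}, by simp, ⟨i, mem_singleton_self i⟩, ?_⟩
    intro k hk
    rw [mem_singleton] at hk; subst hk
    simpa [util, hw.2.1] using hlt
  · rcases hco with h | ⟨j, hj, rfl⟩
    · exact hSne h
    apply hcore
    refine ⟨insert i (π j), subset_univ _, insert_nonempty _ _, ?_⟩
    intro k hk
    rw [mem_insert] at hk
    rcases hk with rfl | hk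
    · exact hlt
    · have hπk : π k = π j := hπ.2 j (mem_univ j) k hk
      rw [hπk]
      have hki : k ≠ i := fun h => hiS (h ▸ hk)
      have hsum : util w (insert i (π j)) k = w k i + util w (π j) k := by
        simp [util, Finset.sum_insert hiS]
      have hacc' := hacc k hk
      rw [hsum] at hacc' ⊢
      have h0 : 0 ≤ w k i := by linarith
      have hcard : (0:ℤ) < Fintype.card α := by
        exact_mod_cast Fintype.card_pos_iff.mpr ⟨i⟩
      rcases hw.2.2 k i hki with h | h
      · linarith
      · linarith
end

section
/- In a symmetric friend-oriented hedonic game, every contractually individually stable partition is individually rational. -/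
open Finset

/-- In a symmetric friend-oriented hedonic game, every contractually
individually stable partition is individually rational. -/
theorem cis_imp_ir {α : Type*} [DecidableEq α] [Fintype α]
    (w : α → α → ℤ) (hw : FriendOriented w) (π : α → Finset α)
    (hπ : IsPartition (Finset.univ : Finset α) π)
    (hcis : CIStable w Finset.univ π) :
    IndRational w Finset.univ π := by
  obtain ⟨hsym, hdiag, hval⟩ := hw
  intro i hi
  by_contra hneg
  push_neg at hneg
  set T := π i with hT
  have hiT : i ∈ T := (hπ.1 i hi).1
  -- No friends of i in T
  have hnofriend : ∀ j ∈ T, j ≠ i → w i j = -1 := by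
    intro j hj hji
    rcases hval i j (Ne.symm hji) with hn | h1
    · exfalso
      have hsplit : util w T i = w i j + ∑ k ∈ T.erase j, w i k := by
        rw [util, ← Finset.add_sum_erase _ _ hj]
      have hbound : ∀ k ∈ T.erase j, (-1 : ℤ) ≤ w i k := by
        intro k hk
        by_cases hki : k = i
        · simp [hki, hdiag]
        · rcases hval i k (fun h => hki h.symm) with h | h <;> rw [h] <;> omega
      have h2 : -((T.erase j).card : ℤ) ≤ ∑ k ∈ T.erase j, w i k := by
        calc -((T.erase j).card : ℤ) = ∑ _k ∈ T.erase j, (-1 : ℤ) := by simp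
        _ ≤ _ := Finset.sum_le_sum hbound
      have h3 : ((T.erase j).card : ℤ) ≤ (Fintype.card α : ℤ) - 1 := by
        have : (T.erase j).card < Fintype.card α :=
          lt_of_lt_of_le (Finset.card_erase_lt_of_mem hj)
            (Finset.card_le_card (Finset.subset_univ T))
        omega
      have : 0 < util w T i := by rw [hsplit, hn]; omega
      omega
    · exact h1
  -- CIS deviation to ∅
  refine hcis i hi ∅ ⟨⟨⟨Or.inl rfl, ?_, by simp, ?_⟩, by simp⟩, ?_⟩
  · intro h
    rw [hT, ← h] at hiT
    exact absurd hiT (Finset.notMem_empty i)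
  · have : util w (insert i ∅) i = 0 := by simp [util, hdiag]
    rw [this]
    exact hneg
  · intro j hj
    rw [show (π i) = T from rfl] at hj ⊢
    have hjT : j ∈ T := Finset.mem_of_mem_erase hj
    have hji : j ≠ i := Finset.ne_of_mem_erase hj
    have hsplit : util w T j = w j i + util w (T.erase i) j := by
      rw [util, util, ← Finset.add_sum_erase _ _ hiT]
    have : w j i = -1 := by rw [hsym j i]; exact hnofriend j hjT hji
    rw [hsplit, this]
    omega
end

section
/- For a symmetric friend-oriented hedonic game and any k > 0, if a partition π is IR-robust under deletion of at most k players, then every coalition S ∈ π is either a clique in the friendship graph or every player in S has at least k+1 friends in S. -/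
open Finset

/-!
If a member `j` of a coalition `S` has an enemy in `S`, deleting the friends of `j` in `S`
leaves `j` among enemies only, with negative utility; so robustness forces `j` to have more
than `k` friends in `S`. If `S` is not a clique, some `a ∈ S` has an enemy `b ∈ S`, hence more
than `k` friends among the `|S| - 2` other players; a member without enemies in `S` is then a
friend of all `|S| - 1 ≥ k + 2` other members.
-/

namespace FriendOriented

variable {α : Type*} [Fintype α] {w : α → α → ℤ}

theorem eq_neg_one_of_not_friend (hw : FriendOriented w) {i j : α} (hij : i ≠ j)
    (h : ¬ Friend w i j) : w i j = -1 := by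
  have hn : (0 : ℤ) < Fintype.card α := by exact_mod_cast Fintype.card_pos_iff.mpr ⟨i⟩
  rcases hw.2.2 i j hij with hn' | h'
  · exact absurd ⟨hij, hn' ▸ hn⟩ h
  · exact h'

variable [DecidableEq α]

theorem util_eq_neg_card_of_forall_not_friend (hw : FriendOriented w) {T : Finset α} {j : α}
    (hT : ∀ l ∈ T, ¬ Friend w j l) : util w T j = -((T.erase j).card : ℤ) := by
  unfold util
  rw [← sum_erase T (hw.2.1 j), sum_congr rfl fun l hl =>
    hw.eq_neg_one_of_not_friend (ne_of_mem_erase hl).symm (hT l (mem_of_mem_erase hl))]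
  simp

end FriendOriented

theorem card_friend_gt_of_robust_of_enemy {α : Type*} [DecidableEq α] [Fintype α]
    {w : α → α → ℤ} (hw : FriendOriented w) {π : α → Finset α} {k : ℕ}
    (hrob : Robust (IndRational w) univ π k) {j e : α} (he : e ∈ π j) (hej : e ≠ j)
    (hf : ¬ Friend w j e) : k < ((π j).filter (fun l => Friend w j l)).card := by
  by_contra! hF
  set F := (π j).filter (fun l => Friend w j l)
  have hjF : j ∉ F := fun h => (mem_filter.mp h).2.1 rfl
  have hIR : 0 ≤ util w (π j \ F) j :=
    hrob.2 F (subset_univ F) hF j (by simp [hjF])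
  have hnone : ∀ l ∈ π j \ F, ¬ Friend w j l := fun l hl hjl =>
    (mem_sdiff.mp hl).2 (mem_filter.mpr ⟨(mem_sdiff.mp hl).1, hjl⟩)
  have heF : e ∈ (π j \ F).erase j :=
    mem_erase.mpr ⟨hej, mem_sdiff.mpr ⟨he, fun h => hf (mem_filter.mp h).2⟩⟩
  rw [hw.util_eq_neg_card_of_forall_not_friend hnone] at hIR
  have := card_pos.mpr ⟨e, heF⟩
  omega

theorem ir_robust_clique_or_min_degree_general {α : Type*} [DecidableEq α] [Fintype α]
    (w : α → α → ℤ) (hw : FriendOriented w) (k : ℕ)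
    (π : α → Finset α) (hπ : IsPartition (Finset.univ : Finset α) π)
    (hrob : Robust (IndRational w) Finset.univ π k) :
    ∀ i : α, IsClique w (π i) ∨
      ∀ j ∈ π i, k + 1 ≤ ((π i).filter (fun l => Friend w j l)).card := by
  intro i
  refine or_iff_not_imp_left.2 fun hcl j hj => ?_
  have hπi : ∀ l ∈ π i, π l = π i := hπ.2 i (mem_univ i)
  have hfriends {l e : α} (hl : l ∈ π i) (he : e ∈ π i) (hel : e ≠ l) (hf : ¬ Friend w l e) :
      k < ((π i).filter (fun m => Friend w l m)).card := by
    simpa only [hπi l hl] using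
      card_friend_gt_of_robust_of_enemy hw hrob (hπi l hl ▸ he) hel hf
  by_cases henemy : ∃ e ∈ π i, e ≠ j ∧ ¬ Friend w j e
  · obtain ⟨e, he, hej, hf⟩ := henemy
    exact hfriends hj he hej hf
  push Not at henemy
  obtain ⟨a, ha, b, hb, hab, hnf⟩ : ∃ a ∈ π i, ∃ b ∈ π i, a ≠ b ∧ ¬ Friend w a b := by
    simpa [IsClique] using hcl
  have hFj : (π i).filter (fun l => Friend w j l) = (π i).erase j := by
    ext l
    simp only [mem_filter, mem_erase]
    exact ⟨fun h => ⟨h.2.1.symm, h.1⟩, fun h => ⟨h.2, henemy l h.2 h.1⟩⟩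
  have hFa : (π i).filter (fun l => Friend w a l) ⊆ ((π i).erase a).erase b := by
    intro l hl
    obtain ⟨hl, hal⟩ := mem_filter.mp hl
    exact mem_erase.mpr ⟨fun h => hnf (h ▸ hal), mem_erase.mpr ⟨hal.1.symm, hl⟩⟩
  have hka := (hfriends ha hb hab.symm hnf).trans_le (card_le_card hFa)
  rw [hFj, card_erase_of_mem hj]
  rw [card_erase_of_mem (mem_erase.mpr ⟨hab.symm, hb⟩),
    card_erase_of_mem ha] at hka
  omega

/-- In a symmetric friend-oriented game, for `k > 0`, each coalition of an
IR-robust partition is a clique or every member has at least `k+1` friends inside it. -/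
theorem ir_robust_clique_or_min_degree {α : Type*} [DecidableEq α] [Fintype α]
    (w : α → α → ℤ) (hw : FriendOriented w) (k : ℕ) (hk : 0 < k)
    (π : α → Finset α) (hπ : IsPartition (Finset.univ : Finset α) π)
    (hrob : Robust (IndRational w) Finset.univ π k) :
    ∀ i : α, IsClique w (π i) ∨
      ∀ j ∈ π i, k + 1 ≤ ((π i).filter (fun l => Friend w j l)).card :=
  ir_robust_clique_or_min_degree_general w hw k π hπ hrob
end

section
/- For a symmetric friend-oriented hedonic game and any k > 0, there exists an NS-robust partition under deletion of at most k players if and only if every connected component of the friendship graph G_w is either a clique or has minimum degree at least k+1. -/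
open Finset

section AuxProof

variable {α : Type*} [DecidableEq α] [Fintype α] {w : α → α → ℤ}

private lemma friend_symm (hw : FriendOriented w) {i j : α} (h : Friend w i j) :
    Friend w j i := ⟨h.1.symm, by rw [hw.1 j i]; exact h.2⟩

private lemma sameComp_symm (hw : FriendOriented w) {i j : α} (h : SameComp w i j) :
    SameComp w j i := by
  induction h with
  | refl => exact .refl
  | tail _ h2 ih => exact Relation.ReflTransGen.head (friend_symm hw h2) ih

private lemma friend_w_eq (hw : FriendOriented w) {i j : α} (h : Friend w i j) :
    w i j = (Fintype.card α : ℤ) := by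
  rcases hw.2.2 i j h.1 with h' | h'
  · exact h'
  · have := h.2; omega

private lemma w_lb (hw : FriendOriented w) (i j : α) : -1 ≤ w i j := by
  by_cases hij : i = j
  · subst hij; rw [hw.2.1]; norm_num
  · rcases hw.2.2 i j hij with h | h <;> rw [h] <;> omega

private lemma w_enemy (hw : FriendOriented w) (hn : 0 < Fintype.card α) {i j : α}
    (hij : i ≠ j) (h : ¬ Friend w i j) : w i j = -1 := by
  rcases hw.2.2 i j hij with h' | h'
  · exact absurd ⟨hij, by rw [h']; exact_mod_cast hn⟩ h
  · exact h'

private lemma w_nonpos (hw : FriendOriented w) {i j : α} (h : ¬ Friend w i j) :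
    w i j ≤ 0 := by
  by_cases hij : i = j
  · subst hij; exact le_of_eq (hw.2.1 i)
  · by_contra h'
    push_neg at h'
    exact h ⟨hij, h'⟩

/-- If `i` has a friend inside `T` (and `i ∈ T`), its utility in `T` is positive. -/
private lemma util_pos (hw : FriendOriented w) {T : Finset α} {i j : α}
    (hj : j ∈ T) (hf : Friend w i j) : 0 < util w T i := by
  have h1 : w i j + ∑ m ∈ T.erase j, w i m = util w T i := Finset.add_sum_erase T _ hj
  have h2 : ((T.erase j).card : ℤ) • (-1 : ℤ) ≤ ∑ m ∈ T.erase j, w i m :=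
    Finset.card_nsmul_le_sum (T.erase j) _ (-1) (fun m _ => w_lb hw i m)
  have h3 : w i j = (Fintype.card α : ℤ) := friend_w_eq hw hf
  have h4 : T.card ≤ Fintype.card α := by
    simpa using Finset.card_le_univ T
  have h5 : (T.erase j).card = T.card - 1 := Finset.card_erase_of_mem hj
  have h6 : 1 ≤ T.card := Finset.card_pos.2 ⟨j, hj⟩
  have h2' : -(((T.erase j).card : ℤ)) ≤ ∑ m ∈ T.erase j, w i m := by
    simpa [nsmul_eq_mul] using h2
  omega

/-- In a robust NS-partition, a player whose set of friends inside its own coalition is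
small lives in a coalition consisting only of itself and friends. -/
private lemma robust_L1 (hw : FriendOriented w) (hn : 0 < Fintype.card α)
    {π : α → Finset α} {k : ℕ}
    (hpart : IsPartition (Finset.univ : Finset α) π)
    (hrob : Robust (NashStable w) Finset.univ π k) {i : α}
    (hcard : ((π i).filter (Friend w i)).card ≤ k) :
    π i ⊆ insert i ((π i).filter (Friend w i)) := by
  set X := (π i).filter (Friend w i) with hXdef
  have hNS := hrob.2 X (Finset.subset_univ X) hcard
  intro m hm
  by_contra hm'
  have hmi : m ≠ i := fun h => hm' (by simp [h])
  have hmX : m ∉ X := fun h => hm' (Finset.mem_insert_of_mem h)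
  have hfm : ¬ Friend w i m := fun hf => hmX (Finset.mem_filter.2 ⟨hm, hf⟩)
  have hiX : i ∉ X := fun h => ((Finset.mem_filter.1 h).2).1 rfl
  have hiu : i ∈ Finset.univ \ X := Finset.mem_sdiff.2 ⟨Finset.mem_univ i, hiX⟩
  apply hNS i hiu ∅
  refine ⟨Or.inl rfl, ?_, Finset.notMem_empty i, ?_⟩
  · show (∅ : Finset α) ≠ π i \ X
    intro h
    have hi' : i ∈ π i \ X :=
      Finset.mem_sdiff.2 ⟨(hpart.1 i (Finset.mem_univ i)).1, hiX⟩
    rw [← h] at hi'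
    exact Finset.notMem_empty i hi'
  · show util w (π i \ X) i < util w (insert i ∅) i
    have hmT : m ∈ π i \ X := Finset.mem_sdiff.2 ⟨hm, hmX⟩
    have h1 : w i m + ∑ m' ∈ (π i \ X).erase m, w i m' = util w (π i \ X) i :=
      Finset.add_sum_erase _ _ hmT
    have h2 : ∑ m' ∈ (π i \ X).erase m, w i m' ≤ 0 := by
      apply Finset.sum_nonpos
      intro m' hm'
      have hm'T := Finset.mem_of_mem_erase hm'
      have hm'X := (Finset.mem_sdiff.1 hm'T).2
      by_cases hmi' : m' = i
      · rw [hmi']; exact le_of_eq (hw.2.1 i)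
      · exact w_nonpos hw (fun hf =>
          hm'X (Finset.mem_filter.2 ⟨(Finset.mem_sdiff.1 hm'T).1, hf⟩))
    have h3 : w i m = -1 := w_enemy hw hn hmi.symm hfm
    have h4 : util w (insert i (∅ : Finset α)) i = 0 := by
      simp [util, hw.2.1]
    rw [h4]
    omega

/-- In a robust NS-partition, a player whose set of friends inside its own coalition is
small has all its friends inside its coalition. -/
private lemma robust_L2 (hw : FriendOriented w) (hn : 0 < Fintype.card α)
    {π : α → Finset α} {k : ℕ}
    (hpart : IsPartition (Finset.univ : Finset α) π)
    (hrob : Robust (NashStable w) Finset.univ π k) {i j : α}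
    (hcard : ((π i).filter (Friend w i)).card ≤ k) (hf : Friend w i j) :
    j ∈ π i := by
  by_contra hj
  set X := (π i).filter (Friend w i) with hXdef
  have hNS := hrob.2 X (Finset.subset_univ X) hcard
  have hiX : i ∉ X := fun h => ((Finset.mem_filter.1 h).2).1 rfl
  have hjX : j ∉ X := fun h => hj (Finset.mem_filter.1 h).1
  have hiu : i ∈ Finset.univ \ X := Finset.mem_sdiff.2 ⟨Finset.mem_univ i, hiX⟩
  have hju : j ∈ Finset.univ \ X := Finset.mem_sdiff.2 ⟨Finset.mem_univ j, hjX⟩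
  have hjj : j ∈ π j := (hpart.1 j (Finset.mem_univ j)).1
  have hinotj : i ∉ π j := by
    intro h
    have := hpart.2 j (Finset.mem_univ j) i h
    rw [← this] at hjj
    exact hj hjj
  apply hNS i hiu (π j \ X)
  refine ⟨Or.inr ⟨j, hju, rfl⟩, ?_, ?_, ?_⟩
  · show π j \ X ≠ π i \ X
    intro h
    have : j ∈ π i \ X := h ▸ Finset.mem_sdiff.2 ⟨hjj, hjX⟩
    exact hj (Finset.mem_sdiff.1 this).1
  · intro h
    exact hinotj (Finset.mem_sdiff.1 h).1
  · show util w (π i \ X) i < util w (insert i (π j \ X)) i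
    have hLHS : util w (π i \ X) i ≤ 0 := by
      apply Finset.sum_nonpos
      intro m hm
      have hmX := (Finset.mem_sdiff.1 hm).2
      by_cases hmi : m = i
      · rw [hmi]; exact le_of_eq (hw.2.1 i)
      · exact w_nonpos hw (fun hf' =>
          hmX (Finset.mem_filter.2 ⟨(Finset.mem_sdiff.1 hm).1, hf'⟩))
    have hRHS : 0 < util w (insert i (π j \ X)) i :=
      util_pos hw (Finset.mem_insert_of_mem (Finset.mem_sdiff.2 ⟨hjj, hjX⟩)) hf
    exact lt_of_le_of_lt hLHS hRHS

/-- The connected component of `i` as a finset. -/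
private noncomputable def compF (w : α → α → ℤ) (i : α) : Finset α :=
  @Finset.filter α (SameComp w i) (fun _ => Classical.propDecidable _) Finset.univ

private lemma mem_compF {i j : α} : j ∈ compF w i ↔ SameComp w i j := by
  simp [compF]

private lemma compF_eq (hw : FriendOriented w) {i j : α} (h : SameComp w i j) :
    compF w j = compF w i := by
  ext m
  rw [mem_compF, mem_compF]
  exact ⟨fun h' => h.trans h', fun h' => (sameComp_symm hw h).trans h'⟩

end AuxProof

/-- An NS-robust partition under deletion of at most `k` players exists iff
every connected component of the friendship graph is a clique or has minimum degree `≥ k+1`. -/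
theorem ns_robust_iff_components {α : Type*} [DecidableEq α] [Fintype α]
    (w : α → α → ℤ) (hw : FriendOriented w) (k : ℕ) (hk : 0 < k) :
    (∃ π : α → Finset α, IsPartition (Finset.univ : Finset α) π ∧
        Robust (NashStable w) Finset.univ π k) ↔
      ∀ v : α,
        (∀ i ∈ comp w v, ∀ j ∈ comp w v, i ≠ j → Friend w i j) ∨
        (∀ u ∈ comp w v, k + 1 ≤ ({x ∈ comp w v | Friend w u x} : Set α).ncard) := by
  constructor
  · -- necessity
    rintro ⟨π, hpart, hrob⟩ v
    by_cases hB : ∀ u ∈ comp w v, k + 1 ≤ ({x ∈ comp w v | Friend w u x} : Set α).ncard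
    · exact Or.inr hB
    · left
      push_neg at hB
      obtain ⟨u, hu, hcardlt⟩ := hB
      have hvu : SameComp w v u := hu
      have hn : 0 < Fintype.card α := Fintype.card_pos_iff.2 ⟨v⟩
      have hset : {x ∈ comp w v | Friend w u x} =
          ↑(Finset.univ.filter (Friend w u)) := by
        ext x
        simp only [Set.mem_setOf_eq, Finset.coe_filter, Finset.mem_univ, true_and, comp]
        exact ⟨fun h => h.2, fun h => ⟨Relation.ReflTransGen.tail hvu h, h⟩⟩
      rw [hset, Set.ncard_coe_finset] at hcardlt
      set Fu := Finset.univ.filter (Friend w u) with hFudef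
      have hFu : Fu.card ≤ k := by omega
      have hfilter_u : (π u).filter (Friend w u) ⊆ Fu := fun m hm =>
        Finset.mem_filter.2 ⟨Finset.mem_univ m, (Finset.mem_filter.1 hm).2⟩
      have hcu : ((π u).filter (Friend w u)).card ≤ k :=
        le_trans (Finset.card_le_card hfilter_u) hFu
      have hFu_sub : Fu ⊆ π u := fun m hm =>
        robust_L2 hw hn hpart hrob hcu (Finset.mem_filter.1 hm).2
      have hπu : π u = insert u Fu := by
        apply Finset.Subset.antisymm
        · exact (robust_L1 hw hn hpart hrob hcu).trans
            (Finset.insert_subset_insert u hfilter_u)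
        · exact Finset.insert_subset (hpart.1 u (Finset.mem_univ u)).1 hFu_sub
      -- key facts for every member of `insert u Fu`
      have key : ∀ a ∈ insert u Fu, π a = insert u Fu ∧
          π a ⊆ insert a (Finset.univ.filter (Friend w a)) ∧
          Finset.univ.filter (Friend w a) ⊆ π a := by
        intro a ha
        have hπa : π a = π u := by
          rcases Finset.mem_insert.1 ha with h | h
          · rw [h]
          · exact hpart.2 u (Finset.mem_univ u) a (hFu_sub h)
        have haa : a ∈ π a := (hpart.1 a (Finset.mem_univ a)).1
        have hcard_a : ((π a).filter (Friend w a)).card ≤ k := by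
          have hsub : (π a).filter (Friend w a) ⊆ (π a).erase a := by
            intro m hm
            exact Finset.mem_erase.2
              ⟨((Finset.mem_filter.1 hm).2).1.symm, (Finset.mem_filter.1 hm).1⟩
          have h1 : ((π a).erase a).card = (π a).card - 1 :=
            Finset.card_erase_of_mem haa
          have h2 : (π a).card ≤ k + 1 := by
            rw [hπa, hπu]
            exact (Finset.card_insert_le _ _).trans (by omega)
          have h3 := Finset.card_le_card hsub
          have h4 : 1 ≤ (π a).card := Finset.card_pos.2 ⟨a, haa⟩
          omega
        refine ⟨hπa.trans hπu, ?_, ?_⟩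
        · exact (robust_L1 hw hn hpart hrob hcard_a).trans
            (Finset.insert_subset_insert a (fun m hm =>
              Finset.mem_filter.2 ⟨Finset.mem_univ m, (Finset.mem_filter.1 hm).2⟩))
        · exact fun m hm =>
            robust_L2 hw hn hpart hrob hcard_a (Finset.mem_filter.1 hm).2
      -- the component is contained in `insert u Fu`
      have hclosed : ∀ x : α, SameComp w u x → x ∈ insert u Fu := by
        intro x hx
        induction hx with
        | refl => exact Finset.mem_insert_self u _
        | @tail b c _ h2 ih =>
          have hc : c ∈ π b :=
            (key b ih).2.2 (Finset.mem_filter.2 ⟨Finset.mem_univ c, h2⟩)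
          rw [(key b ih).1] at hc
          exact hc
      -- conclude: clique
      intro a ha b hb hab
      have ha' : a ∈ insert u Fu :=
        hclosed a ((sameComp_symm hw hvu).trans ha)
      have hb' : b ∈ insert u Fu :=
        hclosed b ((sameComp_symm hw hvu).trans hb)
      have hbπa : b ∈ π a := by rw [(key a ha').1]; exact hb'
      have := (key a ha').2.1 hbπa
      rcases Finset.mem_insert.1 this with h | h
      · exact absurd h.symm hab
      · exact (Finset.mem_filter.1 h).2
  · -- sufficiency
    intro h
    have hgen : ∀ X : Finset α, X.card ≤ k →
        NashStable w (Finset.univ \ X) (fun i => compF w i \ X) := by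
      intro X hXk i hi S hdev
      obtain ⟨hco, hneS, hiS, hlt⟩ := hdev
      have hiX : i ∉ X := (Finset.mem_sdiff.1 hi).2
      have hii : i ∈ compF w i \ X :=
        Finset.mem_sdiff.2 ⟨mem_compF.2 .refl, hiX⟩
      -- no member of `S` is a friend of `i`
      have hSno : ∀ m ∈ S, ¬ Friend w i m := by
        intro m hm hf
        rcases hco with h0 | ⟨j, hjV, hSj⟩
        · subst h0; exact absurd hm (Finset.notMem_empty m)
        · have hSj' : S = compF w j \ X := hSj
          have hjm : SameComp w j m := by
            have := (Finset.mem_sdiff.1 (hSj' ▸ hm)).1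
            exact mem_compF.1 this
          have hij : SameComp w i j :=
            (Relation.ReflTransGen.single hf).trans (sameComp_symm hw hjm)
          apply hneS
          show S = compF w i \ X
          rw [hSj', compF_eq hw hij]
      have htgt : util w (insert i S) i ≤ 0 := by
        apply Finset.sum_nonpos
        intro m hm
        rcases Finset.mem_insert.1 hm with h' | h'
        · rw [h']; exact le_of_eq (hw.2.1 i)
        · exact w_nonpos hw (hSno m h')
      have hcur : 0 ≤ util w (compF w i \ X) i := by
        rcases h i with hclq | hdeg
        · -- clique component
          apply Finset.sum_nonneg
          intro m hm
          have him : SameComp w i m := mem_compF.1 (Finset.mem_sdiff.1 hm).1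
          by_cases hmi : m = i
          · rw [hmi]; exact le_of_eq (hw.2.1 i).symm
          · have hf : Friend w i m :=
              hclq i Relation.ReflTransGen.refl m him (fun h'' => hmi h''.symm)
            rw [friend_w_eq hw hf]
            exact Int.natCast_nonneg _
        · -- min degree at least k+1
          have hdi := hdeg i (Relation.ReflTransGen.refl)
          have hset : {x ∈ comp w i | Friend w i x} =
              ↑(Finset.univ.filter (Friend w i)) := by
            ext x
            simp only [Set.mem_setOf_eq, Finset.coe_filter, Finset.mem_univ,
              true_and, comp]
            exact ⟨fun h' => h'.2,
              fun h' => ⟨Relation.ReflTransGen.single h', h'⟩⟩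
          rw [hset, Set.ncard_coe_finset] at hdi
          have hnot : ¬ (Finset.univ.filter (Friend w i) ⊆ X) := by
            intro hss
            have := Finset.card_le_card hss
            omega
          obtain ⟨j, hjF, hjX⟩ := Finset.not_subset.1 hnot
          have hjC : j ∈ compF w i \ X := Finset.mem_sdiff.2
            ⟨mem_compF.2 (Relation.ReflTransGen.single (Finset.mem_filter.1 hjF).2),
              hjX⟩
          exact le_of_lt (util_pos hw hjC (Finset.mem_filter.1 hjF).2)
      have : util w ((fun i => compF w i \ X) i) i < util w (insert i S) i := hlt
      have hlt' : util w (compF w i \ X) i < util w (insert i S) i := this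
      exact absurd hlt' (not_lt.2 (htgt.trans hcur))
    refine ⟨compF w, ⟨?_, ?_⟩, ?_, ?_⟩
    · exact fun i _ => ⟨mem_compF.2 .refl, Finset.subset_univ _⟩
    · intro i _ j hj
      exact compF_eq hw (mem_compF.1 hj)
    · have h0 := hgen ∅ (Nat.zero_le k)
      simpa only [Finset.sdiff_empty] using h0
    · exact fun X _ hX => hgen X hX
end

section
/- For a symmetric friend-oriented hedonic game, k = 1, and any partition π that is CIS-robust under deletion of a single player: if j is the unique friend of player i, and all neighbors of j in the friendship graph except possibly one are leaves (j is a pseudo-center), then π(i) = {i, j}. -/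
open Finset

/-- `v` is a leaf of the friendship graph: it has exactly one friend. -/
def IsLeaf {α : Type*} [DecidableEq α] [Fintype α] (w : α → α → ℤ) (v : α) : Prop :=
  ∃! u : α, Friend w v u

/-- `j` is a pseudo-center: at most one neighbor of `j` is a non-leaf. -/
def PseudoCenter {α : Type*} [DecidableEq α] [Fintype α] (w : α → α → ℤ) (j : α) : Prop :=
  ∀ u u' : α, Friend w j u → ¬ IsLeaf w u → Friend w j u' → ¬ IsLeaf w u' → u = u'

/-! A leaf `i` cannot share its coalition with anyone but its friend `j`: once `j` is deleted, `i`
is among enemies only and leaves for the empty coalition, with everyone's consent. If `j ∉ π i`,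
then `i` is alone, so `j` must keep a friend in its own coalition even after any one of them is
deleted (otherwise `j` would join `i`). Thus `j` has two friends in its coalition, one of which
is a leaf by the pseudo-center property — contradicting the first observation for that leaf. -/

section Hedonic

variable {α : Type*} {w : α → α → ℤ} {V : Finset α} {π : α → Finset α}

theorem IsLeaf.eq_of_friend [DecidableEq α] [Fintype α] {v u u' : α} (hv : IsLeaf w v)
    (hu : Friend w v u) (hu' : Friend w v u') : u = u' :=
  hv.unique hu hu'

theorem IsPartition.mem_self (hπ : IsPartition V π) {a : α} (ha : a ∈ V) : a ∈ π a :=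
  (hπ.1 a ha).1

theorem IsPartition.eq_of_mem (hπ : IsPartition V π) {a b : α} (ha : a ∈ V) (hb : b ∈ π a) :
    π b = π a :=
  hπ.2 a ha b hb

theorem Robust.sdiff_singleton [DecidableEq α] {St : Finset α → (α → Finset α) → Prop}
    {k : ℕ} (h : Robust St V π k) (hk : 1 ≤ k) {x : α} (hx : x ∈ V) :
    St (V \ {x}) (fun a => π a \ {x}) :=
  h.2 {x} (singleton_subset_iff.2 hx) (by simpa using hk)

namespace FriendOriented

variable [Fintype α] (hw : FriendOriented w)
include hw

theorem friend_symm {a b : α} (h : Friend w a b) : Friend w b a :=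
  ⟨h.1.symm, hw.1 a b ▸ h.2⟩

theorem eq_neg_one_of_not_friend_s6 {a b : α} (hab : a ≠ b) (h : ¬ Friend w a b) : w a b = -1 := by
  refine (hw.2.2 a b hab).resolve_left fun h' => h ⟨hab, ?_⟩
  have : Nonempty α := ⟨a⟩
  rw [h']
  exact_mod_cast Fintype.card_pos

variable [DecidableEq α]

theorem util_eq_one_sub_card {S : Finset α} {a : α} (ha : a ∈ S)
    (hno : ∀ z ∈ S, ¬ Friend w a z) : util w S a = 1 - #S := by
  have henemy : ∀ z ∈ S.erase a, w a z = -1 := fun z hz =>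
    hw.eq_neg_one_of_not_friend_s6 (mem_erase.1 hz).1.symm (hno z (mem_erase.1 hz).2)
  rw [util, ← add_sum_erase S _ ha, hw.2.1, sum_congr rfl henemy, sum_const,
    card_erase_of_mem ha]
  simp [Nat.cast_sub (card_pos.2 ⟨a, ha⟩)]

theorem util_le_util_erase {S : Finset α} {a z : α} (ha : a ∈ S) (hza : z ≠ a)
    (h : ¬ Friend w a z) : util w S z ≤ util w (S.erase a) z := by
  rw [util, util, sum_erase_eq_sub ha, hw.1, hw.eq_neg_one_of_not_friend_s6 hza.symm h]
  omega

end FriendOriented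

variable [DecidableEq α] [Fintype α]

theorem CIStable.exists_friend_of_mem (hw : FriendOriented w) (hπ : CIStable w V π) {a b : α}
    (ha : a ∈ V) (haa : a ∈ π a) (hb : b ∈ π a) (hba : b ≠ a) :
    ∃ z ∈ π a, Friend w a z := by
  by_contra! hno
  have hcard : 1 < #(π a) := one_lt_card.2 ⟨a, haa, b, hb, hba.symm⟩
  refine hπ a ha ∅ ⟨⟨⟨Or.inl rfl, (ne_empty_of_mem haa).symm, notMem_empty a, ?_⟩,
    by simp⟩, fun z hz => ?_⟩
  · rw [hw.util_eq_one_sub_card haa hno]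
    simp [util, hw.2.1]
    omega
  · obtain ⟨hza, hz⟩ := mem_erase.1 hz
    exact hw.util_le_util_erase haa hza (hno z hz)

theorem CIStable.exists_friend_of_friend_alone (hw : FriendOriented w) (hπ : CIStable w V π)
    {a b : α} (ha : a ∈ V) (hb : b ∈ V) (haa : a ∈ π a) (hab : Friend w a b)
    (hπb : π b = {b}) : ∃ z ∈ π a, Friend w a z := by
  by_contra! hno
  have hai : a ∉ ({b} : Finset α) := by simpa using hab.1
  have hpair : util w (insert a {b}) a = w a b ∧ util w (insert a {b}) b = w b a := by
    simp [util, sum_insert hai, hw.2.1]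
  refine hπ a ha {b} ⟨⟨⟨Or.inr ⟨b, hb, hπb.symm⟩, fun h => hai (h ▸ haa), hai, ?_⟩,
    fun z hz => ?_⟩, fun z hz => ?_⟩
  · rw [hw.util_eq_one_sub_card haa hno, hpair.1]
    have := card_pos.2 ⟨a, haa⟩
    linarith [hab.2]
  · rw [mem_singleton.1 hz, hpair.2]
    simpa [util, hw.2.1] using (hw.friend_symm hab).2.le
  · obtain ⟨hza, hz⟩ := mem_erase.1 hz
    exact hw.util_le_util_erase haa hza (hno z hz)

variable (hw : FriendOriented w) (hrob : Robust (CIStable w) univ π 1)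
include hw hrob

theorem subset_pair_of_unique_friend {i j : α} (hij : i ≠ j) (hi : i ∈ π i)
    (huniq : ∀ l, Friend w i l → l = j) : π i ⊆ {i, j} := by
  intro x hx
  by_contra hxij
  simp only [mem_insert, mem_singleton, not_or] at hxij
  obtain ⟨z, hz, hiz⟩ := (hrob.sdiff_singleton le_rfl (mem_univ j)).exists_friend_of_mem hw
    (a := i) (b := x) (by simpa using hij) (by simpa [hij] using hi)
    (by simpa [hx] using hxij.2) hxij.1
  simp [huniq z hiz] at hz

theorem subset_pair_of_leaf (hπ : IsPartition univ π) {j y : α} (hy : y ∈ π j)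
    (hjy : Friend w j y) (hleaf : IsLeaf w y) : π j ⊆ {y, j} :=
  hπ.eq_of_mem (mem_univ j) hy ▸ subset_pair_of_unique_friend hw hrob hjy.1.symm
    (hπ.mem_self (mem_univ y)) fun _ hl => hleaf.eq_of_friend hl (hw.friend_symm hjy)

theorem mem_of_unique_friend_of_pseudoCenter (hπ : IsPartition univ π) {i j : α}
    (hij : Friend w i j) (huniq : ∀ l, Friend w i l → l = j) (hpc : PseudoCenter w j) :
    j ∈ π i := by
  have hmem : ∀ a, a ∈ π a := fun a => hπ.mem_self (mem_univ a)
  by_contra hji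
  have hi_alone : π i = {i} := eq_singleton_iff_unique_mem.2 ⟨hmem i, fun b hb => by
    by_contra hbi
    obtain ⟨z, hz, hiz⟩ := hrob.1.exists_friend_of_mem hw (mem_univ i) (hmem i) hb hbi
    exact hji (huniq z hiz ▸ hz)⟩
  have hi_not : i ∉ π j := fun h => hji (hπ.eq_of_mem (mem_univ j) h ▸ hmem j)
  obtain ⟨y, hy, hjy⟩ := hrob.1.exists_friend_of_friend_alone hw (mem_univ j) (mem_univ i)
    (hmem j) (hw.friend_symm hij) hi_alone
  have hyi : y ≠ i := fun h => hi_not (h ▸ hy)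
  -- deleting `y` leaves `i` alone, so `j` needs a second friend at home
  have hCIS_y := hrob.sdiff_singleton le_rfl (mem_univ y)
  obtain ⟨y', hy', hjy'⟩ := hCIS_y.exists_friend_of_friend_alone hw (a := j) (b := i)
    (by simpa using hjy.1) (by simpa using hyi.symm)
    (by simpa [hmem j] using hjy.1) (hw.friend_symm hij) (by simp [hi_alone, hyi.symm])
  obtain ⟨hy', hy'y⟩ : y' ∈ π j ∧ y' ≠ y := by simpa using hy'
  by_cases hleaf : IsLeaf w y
  · simpa [hy'y, hjy'.1.symm] using subset_pair_of_leaf hw hrob hπ hy hjy hleaf hy'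
  · have hleaf' : IsLeaf w y' := by_contra fun h => hy'y (hpc y' y hjy' h hjy hleaf)
    simpa [hy'y.symm, hjy.1.symm] using subset_pair_of_leaf hw hrob hπ hy' hjy' hleaf' hy

end Hedonic

/-- For `k = 1` and a CIS-robust partition `π`, if `j` is the unique friend
of `i` and `j` is a pseudo-center of the friendship graph, then `π i = {i, j}`. -/
theorem cis_robust_pair {α : Type*} [DecidableEq α] [Fintype α]
    (w : α → α → ℤ) (hw : FriendOriented w) (π : α → Finset α)
    (hπ : IsPartition (Finset.univ : Finset α) π)
    (hrob : Robust (CIStable w) Finset.univ π 1)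
    (i j : α) (hfriend : Friend w i j) (huniq : ∀ l : α, Friend w i l → l = j)
    (hpc : PseudoCenter w j) :
    π i = {i, j} := by
  have hi : i ∈ π i := hπ.mem_self (mem_univ i)
  have hj : j ∈ π i := mem_of_unique_friend_of_pseudoCenter hw hrob hπ hfriend huniq hpc
  exact (subset_pair_of_unique_friend hw hrob hfriend.1 hi huniq).antisymm
    (insert_subset hi (singleton_subset_iff.2 hj))
end

section
/- For any symmetric additively separable hedonic game with nonnegative-or-negative integer weights and any k > 0, there exists a partition that is individually stable and IR-robust under deletion of at most k players; in particular, any partition in which every coalition consists of players who pairwise have nonnegative weights for each other and which admits no IS-deviation works. -/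
open Finset

section AuxProofs

variable {α : Type*} [DecidableEq α] [Fintype α]

lemma util_insert' (w : α → α → ℤ) (S : Finset α) (i j : α) (h : i ∉ S) :
    util w (insert i S) j = w j i + util w S j := by
  simp [util, Finset.sum_insert h]

lemma max_is_indstable (w : α → α → ℤ) (hsym : ∀ i j : α, w i j = w j i)
    (hdiag : ∀ i : α, w i i = 0)
    (π : α → Finset α)
    (hpart : IsPartition (Finset.univ : Finset α) π)
    (hnn : ∀ i : α, ∀ u ∈ π i, ∀ v ∈ π i, u ≠ v → 0 ≤ w u v)
    (hmax : ∀ π' : α → Finset α, IsPartition (Finset.univ : Finset α) π' →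
      (∀ i : α, ∀ u ∈ π' i, ∀ v ∈ π' i, u ≠ v → 0 ≤ w u v) →
      ∑ j, util w (π' j) j ≤ ∑ j, util w (π j) j) :
    IndStable w Finset.univ π := by
  intro i _ S hdev
  obtain ⟨⟨hco, hne, hiS, hlt⟩, hacc⟩ := hdev
  have hmem : ∀ j : α, j ∈ π j := fun j => (hpart.1 j (mem_univ j)).1
  have hsame : ∀ j : α, ∀ l ∈ π j, π l = π j := fun j => hpart.2 j (mem_univ j)
  have hSπ : ∀ j ∈ S, π j = S := by
    intro j hj
    rcases hco with rfl | ⟨j0, _, rfl⟩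
    · simp at hj
    · exact hsame j0 j hj
  have hSdisj : ∀ j ∈ S, j ∉ π i := by
    intro j hj hjπ
    exact hne ((hSπ j hj).symm.trans (hsame i j hjπ))
  set B := insert i S with hB
  set A := (π i).erase i with hA
  have hiB : i ∈ B := mem_insert_self _ _
  have hiA : i ∉ A := notMem_erase _ _
  have hAB : ∀ j ∈ A, j ∉ B := by
    intro j hj hjB
    have hjπ : j ∈ π i := mem_of_mem_erase hj
    rcases mem_insert.1 hjB with rfl | hjS
    · exact (Finset.ne_of_mem_erase hj) rfl
    · exact hSdisj j hjS hjπ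
  set π' : α → Finset α := fun j => if j ∈ B then B else if j ∈ π i then A else π j with hπ'
  have hπ'B : ∀ j ∈ B, π' j = B := fun j hj => by simp [hπ', hj]
  have hπ'A : ∀ j ∈ A, π' j = A := by
    intro j hj
    simp only [hπ', if_neg (hAB j hj), if_pos (mem_of_mem_erase hj)]
  have hwji : ∀ j ∈ S, 0 ≤ w j i := by
    intro j hj
    have h := hacc j hj
    rw [hB, util_insert' w S i j hiS] at h
    linarith
  -- nonnegativity for π'
  have hnn' : ∀ a : α, ∀ u ∈ π' a, ∀ v ∈ π' a, u ≠ v → 0 ≤ w u v := by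
    intro a u hu v hv huv
    by_cases haB : a ∈ B
    · rw [hπ'B a haB] at hu hv
      rcases mem_insert.1 hu with rfl | hu' <;> rcases mem_insert.1 hv with rfl | hv'
      · exact absurd rfl huv
      · rw [hsym]; exact hwji v hv'
      · exact hwji u hu'
      · exact hnn u u (by rw [hSπ u hu']; exact hu') v (by rw [hSπ u hu']; exact hv') huv
    · by_cases haπ : a ∈ π i
      · simp only [hπ', if_neg haB, if_pos haπ] at hu hv
        exact hnn i u (mem_of_mem_erase hu) v (mem_of_mem_erase hv) huv
      · simp only [hπ', if_neg haB, if_neg haπ] at hu hv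
        exact hnn a u hu v hv huv
  -- partition property for π'
  have hpart' : IsPartition (Finset.univ : Finset α) π' := by
    constructor
    · intro j _
      refine ⟨?_, subset_univ _⟩
      by_cases hjB : j ∈ B
      · rw [hπ'B j hjB]; exact hjB
      · by_cases hjπ : j ∈ π i
        · have hji : j ≠ i := by rintro rfl; exact hjB hiB
          simp only [hπ', if_neg hjB, if_pos hjπ]
          exact mem_erase.2 ⟨hji, hjπ⟩
        · simp only [hπ', if_neg hjB, if_neg hjπ]
          exact hmem j
    · intro j _ l hl
      by_cases hjB : j ∈ B
      · rw [hπ'B j hjB] at hl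
        rw [hπ'B j hjB, hπ'B l hl]
      · by_cases hjπ : j ∈ π i
        · have hj' : π' j = A := by simp only [hπ', if_neg hjB, if_pos hjπ]
          rw [hj'] at hl
          rw [hj', hπ'A l hl]
        · have hj' : π' j = π j := by simp only [hπ', if_neg hjB, if_neg hjπ]
          rw [hj'] at hl
          rw [hj']
          have hπl : π l = π j := hsame j l hl
          have hlB : l ∉ B := by
            intro hlB
            rcases mem_insert.1 hlB with rfl | hlS
            · exact hjπ (by rw [hπl]; exact hmem j)
            · have hjS : π j = S := hπl.symm.trans (hSπ l hlS)
              exact hjB (mem_insert_of_mem (by rw [← hjS]; exact hmem j))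
          have hlπi : l ∉ π i := by
            intro h
            have : π i = π j := (hsame i l h).symm.trans hπl
            exact hjπ (by rw [this]; exact hmem j)
          have hl' : π' l = π l := by simp only [hπ', if_neg hlB, if_neg hlπi]
          rw [hl', hπl]
  -- welfare comparison
  have hmaxle := hmax π' hpart' hnn'
  have hπiA : π i = insert i A := by rw [hA, Finset.insert_erase (hmem i)]
  have hutilBi : util w B i = util w S i := by
    rw [hB, util_insert' w S i i hiS, hdiag]; ring
  have hutilπi : util w (π i) i = util w A i := by
    rw [hπiA, util_insert' w A i i hiA, hdiag]; ring
  have hdiff : ∑ j, util w (π' j) j - ∑ j, util w (π j) j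
      = 2 * (util w (insert i S) i - util w (π i) i) := by
    rw [← Finset.sum_sub_distrib]
    have hsub : ∑ j : α, (util w (π' j) j - util w (π j) j)
        = ∑ j ∈ B ∪ A, (util w (π' j) j - util w (π j) j) := by
      refine (Finset.sum_subset (subset_univ _) ?_).symm
      intro j _ hj
      have hjB : j ∉ B := fun h => hj (mem_union_left _ h)
      have hjA : j ∉ A := fun h => hj (mem_union_right _ h)
      have hjπ : j ∉ π i := by
        intro h
        rcases eq_or_ne j i with rfl | hji
        · exact hjB hiB
        · exact hjA (mem_erase.2 ⟨hji, h⟩)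
      simp only [hπ', if_neg hjB, if_neg hjπ, sub_self]
    have hBA : B ∪ A = insert i (S ∪ A) := by
      rw [hB, insert_union]
    have hiSA : i ∉ S ∪ A := by
      simp only [mem_union, not_or]
      exact ⟨hiS, hiA⟩
    have hSA : Disjoint S A := by
      rw [Finset.disjoint_left]
      intro j hjS hjA
      exact hSdisj j hjS (mem_of_mem_erase hjA)
    rw [hsub, hBA, Finset.sum_insert hiSA, Finset.sum_union hSA]
    have hterm1 : util w (π' i) i - util w (π i) i = util w B i - util w (π i) i := by
      rw [hπ'B i hiB]
    have hterm2 : ∑ j ∈ S, (util w (π' j) j - util w (π j) j) = ∑ j ∈ S, w i j := by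
      refine Finset.sum_congr rfl ?_
      intro j hj
      rw [hπ'B j (mem_insert_of_mem hj), hSπ j hj, hB, util_insert' w S i j hiS,
        hsym i j]
      ring
    have hterm3 : ∑ j ∈ A, (util w (π' j) j - util w (π j) j) = ∑ j ∈ A, -(w i j) := by
      refine Finset.sum_congr rfl ?_
      intro j hj
      have : π j = π i := hsame i j (mem_of_mem_erase hj)
      rw [hπ'A j hj, this, hπiA, util_insert' w A i j hiA, hsym i j]
      ring
    have hSsum : ∑ j ∈ S, w i j = util w S i := rfl
    have hAsum : ∑ j ∈ A, w i j = util w A i := rfl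
    rw [hterm1, hterm2, hterm3, Finset.sum_neg_distrib, hSsum, hAsum,
      ← hutilBi, ← hutilπi, hB]
    ring
  rw [hB] at hlt
  omega

end AuxProofs

/-- Any symmetric additively separable game admits a partition that is
individually stable and IR-robust under deletion of at most `k` players; moreover, any
individually stable partition whose coalitions consist of players with pairwise
nonnegative weights works. -/
theorem exists_is_and_ir_robust {α : Type*} [DecidableEq α] [Fintype α]
    (w : α → α → ℤ) (hsym : ∀ i j : α, w i j = w j i) (hdiag : ∀ i : α, w i i = 0)
    (k : ℕ) (hk : 0 < k) :
    (∃ π : α → Finset α, IsPartition (Finset.univ : Finset α) π ∧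
        IndStable w Finset.univ π ∧ Robust (IndRational w) Finset.univ π k) ∧
      ∀ π : α → Finset α, IsPartition (Finset.univ : Finset α) π →
        (∀ i : α, ∀ u ∈ π i, ∀ v ∈ π i, u ≠ v → 0 ≤ w u v) →
        IndStable w Finset.univ π →
        Robust (IndRational w) Finset.univ π k := by
  classical
  have key2 : ∀ π : α → Finset α, IsPartition (Finset.univ : Finset α) π →
      (∀ i : α, ∀ u ∈ π i, ∀ v ∈ π i, u ≠ v → 0 ≤ w u v) →
      IndStable w Finset.univ π →
      Robust (IndRational w) Finset.univ π k := by
    intro π hpart hnn _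
    have hIR : ∀ (X : Finset α), ∀ i ∈ Finset.univ \ X, 0 ≤ util w (π i \ X) i := by
      intro X i hi
      refine Finset.sum_nonneg ?_
      intro j hj
      have hjπ : j ∈ π i := (Finset.mem_sdiff.1 hj).1
      rcases eq_or_ne i j with rfl | hij
      · rw [hdiag]
      · exact hnn i i ((hpart.1 i (mem_univ i)).1) j hjπ hij
    constructor
    · intro i hi
      have h := hIR ∅ i (by simpa using hi)
      simpa using h
    · intro X _ _ i hi
      exact hIR X i hi
  refine ⟨?_, key2⟩
  obtain ⟨π, hπ, hmaxπ⟩ := Finset.exists_max_image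
      ((Finset.univ : Finset (α → Finset α)).filter
        (fun p => IsPartition (Finset.univ : Finset α) p ∧
          ∀ i : α, ∀ u ∈ p i, ∀ v ∈ p i, u ≠ v → 0 ≤ w u v))
      (fun p => ∑ j, util w (p j) j) ⟨fun i => {i}, by
        simp only [mem_filter, mem_univ, true_and]
        refine ⟨⟨fun i _ => ⟨mem_singleton_self i, subset_univ _⟩,
          fun i _ j hj => by rw [mem_singleton.1 hj]⟩, ?_⟩
        intro i u hu v hv huv
        rw [mem_singleton.1 hu, mem_singleton.1 hv] at huv
        exact absurd rfl huv⟩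
  rw [mem_filter] at hπ
  obtain ⟨_, hpart, hnn⟩ := hπ
  have hIS : IndStable w Finset.univ π := by
    apply max_is_indstable w hsym hdiag π hpart hnn
    intro π' hp' hn'
    exact hmaxπ π' (mem_filter.2 ⟨mem_univ _, hp', hn'⟩)
  exact ⟨π, hpart, hIS, key2 π hpart hnn hIS⟩
end

section
/- In a symmetric additively separable hedonic game, consider the dynamics that starts from the partition into singletons and at each step lets some player perform an IS-deviation. Then at every step of this dynamics, every coalition of the current partition contains no pair of players with negative mutual weight; consequently, any partition reachable by this dynamics is IR-robust under deletion of any set of players. -/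
open Finset

/-- One step of the IS-deviation dynamics: player `i` performs an IS-deviation to `S`,
which replaces `π i` by `π i \ {i}` and `S` by `S ∪ {i}`. -/
def ISStep {α : Type*} [DecidableEq α] [Fintype α] (w : α → α → ℤ)
    (π π' : α → Finset α) : Prop :=
  ∃ (i : α) (S : Finset α), ISDev w Finset.univ π i S ∧
    π' = fun l =>
      if l ∈ insert i S then insert i S else if l ∈ π i then (π i).erase i else π l


private lemma isstep_pres {α : Type*} [DecidableEq α] [Fintype α]
    (w : α → α → ℤ) (hsym : ∀ i j : α, w i j = w j i)
    (σ π' : α → Finset α) (hstep : ISStep w σ π')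
    (hmem : ∀ l, l ∈ σ l) (hinv : ∀ i : α, ∀ u ∈ σ i, ∀ v ∈ σ i, u ≠ v → 0 ≤ w u v) :
    (∀ l, l ∈ π' l) ∧ (∀ i : α, ∀ u ∈ π' i, ∀ v ∈ π' i, u ≠ v → 0 ≤ w u v) := by
  obtain ⟨i, S, ⟨⟨hcoal, _, hiS, _⟩, hacc⟩, rfl⟩ := hstep
  have hSgood : ∀ u ∈ S, ∀ v ∈ S, u ≠ v → 0 ≤ w u v := by
    rcases hcoal with rfl | ⟨j, _, rfl⟩
    · simp
    · exact hinv j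
  have hifriend : ∀ v ∈ S, 0 ≤ w v i := by
    intro v hv
    have h := hacc v hv
    rw [util, util, Finset.sum_insert hiS] at h
    linarith
  have hnew : ∀ u ∈ insert i S, ∀ v ∈ insert i S, u ≠ v → 0 ≤ w u v := by
    intro u hu v hv huv
    rcases Finset.mem_insert.1 hu with rfl | hu'
    · rcases Finset.mem_insert.1 hv with rfl | hv'
      · exact absurd rfl huv
      · rw [hsym]; exact hifriend v hv'
    · rcases Finset.mem_insert.1 hv with rfl | hv'
      · exact hifriend u hu'
      · exact hSgood u hu' v hv' huv
  constructor
  · intro l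
    dsimp only
    by_cases h1 : l ∈ insert i S
    · rw [if_pos h1]; exact h1
    · by_cases h2 : l ∈ σ i
      · rw [if_neg h1, if_pos h2]
        refine Finset.mem_erase.2 ⟨?_, h2⟩
        intro h; exact h1 (h ▸ Finset.mem_insert_self i S)
      · rw [if_neg h1, if_neg h2]; exact hmem l
  · intro l u hu v hv huv
    dsimp only at hu hv
    by_cases h1 : l ∈ insert i S
    · rw [if_pos h1] at hu hv
      exact hnew u hu v hv huv
    · by_cases h2 : l ∈ σ i
      · rw [if_neg h1, if_pos h2] at hu hv
        exact hinv i u (Finset.mem_of_mem_erase hu) v (Finset.mem_of_mem_erase hv) huv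
      · rw [if_neg h1, if_neg h2] at hu hv
        exact hinv l u hu v hv huv

/-- Along the IS-deviation dynamics started from the singleton partition,
no coalition ever contains two players with negative mutual weight; consequently any
reachable partition is IR-robust under deletion of any set of players. -/
theorem is_dynamics_no_enemies {α : Type*} [DecidableEq α] [Fintype α]
    (w : α → α → ℤ) (hsym : ∀ i j : α, w i j = w j i) (hdiag : ∀ i : α, w i i = 0)
    (π : α → Finset α)
    (hreach : Relation.ReflTransGen (ISStep w) (fun i => {i}) π) :
    (∀ i : α, ∀ u ∈ π i, ∀ v ∈ π i, u ≠ v → 0 ≤ w u v) ∧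
      ∀ X : Finset α, IndRational w (Finset.univ \ X) (fun i => π i \ X) := by

  have key : (∀ l, l ∈ π l) ∧ (∀ i : α, ∀ u ∈ π i, ∀ v ∈ π i, u ≠ v → 0 ≤ w u v) := by
    induction hreach with
    | refl =>
      refine ⟨fun l => by simp, fun i u hu v hv huv => ?_⟩
      simp only [Finset.mem_singleton] at hu hv
      exact absurd (hu.trans hv.symm) huv
    | tail hsteps step ih => exact isstep_pres w hsym _ _ step ih.1 ih.2
  obtain ⟨hmem, hinv⟩ := key
  refine ⟨hinv, fun X i hi => ?_⟩
  refine Finset.sum_nonneg fun j hj => ?_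
  rcases eq_or_ne i j with rfl | hij
  · simp [hdiag]
  · exact hinv i i (hmem i) j (Finset.mem_sdiff.1 hj).1 hij
end

section
/- In a symmetric additively separable hedonic game with symmetric weights, when a player i performs an IS-deviation from π(i) to a coalition S, the potential Φ(π) = ∑_{T ∈ π} ∑_{\{u,v\} ⊆ T} w(u,v) strictly increases. -/
open Finset

/-- Twice the potential `Φ(π)`: the sum over the coalitions of `π` of the total weight
of all (ordered) pairs inside the coalition.  Since `w` is symmetric and zero on the
diagonal, this equals `2 Φ(π)` where `Φ` sums `w` over unordered within-coalition pairs. -/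
def pot {α : Type*} [DecidableEq α] [Fintype α] (w : α → α → ℤ) (π : α → Finset α) : ℤ :=
  ∑ T ∈ (Finset.univ : Finset α).image π, ∑ u ∈ T, ∑ v ∈ T, w u v


lemma pot_eq_sum_util {α : Type*} [DecidableEq α] [Fintype α] (w : α → α → ℤ)
    (π : α → Finset α) (hπ : IsPartition (Finset.univ : Finset α) π) :
    pot w π = ∑ u, util w (π u) u := by
  obtain ⟨hmem, hcl⟩ := hπ
  have hfix : ∀ u : α, ∀ T ∈ (Finset.univ : Finset α).image π, u ∈ T → π u = T := by
    intro u T hT hu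
    obtain ⟨a, _, rfl⟩ := Finset.mem_image.mp hT
    exact hcl a (Finset.mem_univ a) u hu
  have hdisj : Set.PairwiseDisjoint ((Finset.univ : Finset α).image π : Set (Finset α)) id := by
    intro T1 h1 T2 h2 hne
    simp only [Function.onFun, id] at *
    rw [Finset.disjoint_left]
    intro u hu1 hu2
    exact hne ((hfix u T1 h1 hu1).symm.trans (hfix u T2 h2 hu2))
  have hcover : ((Finset.univ : Finset α).image π).biUnion id = Finset.univ := by
    apply Finset.eq_univ_iff_forall.mpr
    intro u
    exact Finset.mem_biUnion.mpr ⟨π u, Finset.mem_image_of_mem π (Finset.mem_univ u),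
      (hmem u (Finset.mem_univ u)).1⟩
  calc pot w π = ∑ T ∈ (Finset.univ : Finset α).image π, ∑ u ∈ T, util w (π u) u := by
        unfold pot
        refine Finset.sum_congr rfl fun T hT => Finset.sum_congr rfl fun u hu => ?_
        rw [util, hfix u T hT hu]
    _ = ∑ u ∈ ((Finset.univ : Finset α).image π).biUnion id, util w (π u) u := by
        rw [Finset.sum_biUnion hdisj]; rfl
    _ = ∑ u, util w (π u) u := by rw [hcover]

/-- In a symmetric additively separable game, an IS-deviation strictly
increases the potential `Φ` (equivalently, `2 Φ`). -/
theorem is_deviation_increases_potential {α : Type*} [DecidableEq α] [Fintype α]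
    (w : α → α → ℤ) (hsym : ∀ i j : α, w i j = w j i) (hdiag : ∀ i : α, w i i = 0)
    (π : α → Finset α) (hπ : IsPartition (Finset.univ : Finset α) π)
    (i : α) (S : Finset α) (hdev : ISDev w Finset.univ π i S)
    (π' : α → Finset α)
    (hπ' : π' = fun l =>
      if l ∈ insert i S then insert i S else if l ∈ π i then (π i).erase i else π l) :
    pot w π < pot w π' := by
  obtain ⟨⟨hco, hSne, hiS, hlt⟩, hacc⟩ := hdev
  obtain ⟨hmem, hcl⟩ := hπ
  have hiπ : i ∈ π i := (hmem i (Finset.mem_univ i)).1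
  have hSeq : ∀ u ∈ S, π u = S := by
    intro u hu
    rcases hco with h | ⟨j, _, rfl⟩
    · exact absurd hu (by simp [h])
    · exact hcl j (Finset.mem_univ j) u hu
  have hSdisj : ∀ u ∈ S, u ∉ π i := by
    intro u hu hu'
    exact hSne ((hSeq u hu).symm.trans (hcl i (Finset.mem_univ i) u hu'))
  have hiiS : i ∈ insert i S := Finset.mem_insert_self i S
  -- values of π'
  have hval1 : ∀ u ∈ insert i S, π' u = insert i S := by
    intro u hu; rw [hπ']; simp [hu]
  have herase_not : ∀ u ∈ (π i).erase i, u ∉ insert i S := by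
    intro u hu
    obtain ⟨hne, hmem'⟩ := Finset.mem_erase.mp hu
    simp only [Finset.mem_insert]
    rintro (rfl | hS)
    · exact hne rfl
    · exact hSdisj u hS hmem'
  have hval2 : ∀ u ∈ (π i).erase i, π' u = (π i).erase i := by
    intro u hu
    rw [hπ']
    simp only [herase_not u hu, if_false, (Finset.mem_erase.mp hu).2, if_true]
  have hval3 : ∀ u : α, u ∉ insert i S → u ∉ π i → π' u = π u := by
    intro u h1 h2
    rw [hπ']; simp [h1, h2]
  -- π' is a partition
  have hπ'part : IsPartition (Finset.univ : Finset α) π' := by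
    constructor
    · intro u _
      refine ⟨?_, Finset.subset_univ _⟩
      by_cases h1 : u ∈ insert i S
      · rw [hval1 u h1]; exact h1
      · by_cases h2 : u ∈ π i
        · have hu : u ∈ (π i).erase i :=
            Finset.mem_erase.mpr ⟨fun h => h1 (h ▸ hiiS), h2⟩
          rw [hval2 u hu]; exact hu
        · rw [hval3 u h1 h2]; exact (hmem u (Finset.mem_univ u)).1
    · intro u _ j hj
      by_cases h1 : u ∈ insert i S
      · rw [hval1 u h1] at hj
        rw [hval1 j hj, hval1 u h1]
      · by_cases h2 : u ∈ π i
        · have hu : u ∈ (π i).erase i :=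
            Finset.mem_erase.mpr ⟨fun h => h1 (h ▸ hiiS), h2⟩
          rw [hval2 u hu] at hj
          rw [hval2 j hj, hval2 u hu]
        · rw [hval3 u h1 h2] at hj
          have hπj : π j = π u := hcl u (Finset.mem_univ u) j hj
          have huu : u ∈ π u := (hmem u (Finset.mem_univ u)).1
          have hj1 : j ∉ insert i S := by
            simp only [Finset.mem_insert]
            rintro (rfl | hS)
            · apply h2; rw [hπj]; exact huu
            · apply h1
              apply Finset.mem_insert_of_mem
              rw [← hSeq j hS, hπj]; exact huu
          have hj2 : j ∉ π i := by
            intro hjp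
            apply h2
            rw [← hcl i (Finset.mem_univ i) j hjp, hπj]
            exact huu
          rw [hval3 j hj1 hj2, hval3 u h1 h2, hπj]
  rw [pot_eq_sum_util w π ⟨hmem, hcl⟩, pot_eq_sum_util w π' hπ'part, ← sub_pos,
    ← Finset.sum_sub_distrib]
  -- the difference is supported on A := insert i S ∪ (π i).erase i
  have hdisjA : Disjoint (insert i S) ((π i).erase i) := by
    rw [Finset.disjoint_left]
    intro u hu hu'
    exact herase_not u hu' hu
  have hsupp : ∑ u : α, (util w (π' u) u - util w (π u) u)
      = ∑ u ∈ insert i S ∪ (π i).erase i, (util w (π' u) u - util w (π u) u) := by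
    refine (Finset.sum_subset (Finset.subset_univ _) ?_).symm
    intro u _ hu
    rw [Finset.mem_union, not_or] at hu
    have h2 : u ∉ π i := by
      intro h
      exact hu.2 (Finset.mem_erase.mpr ⟨fun he => hu.1 (he ▸ hiiS), h⟩)
    rw [hval3 u hu.1 h2, sub_self]
  rw [hsupp, Finset.sum_union hdisjA, Finset.sum_insert hiS]
  have hud : util w (insert i S) i = util w S i := by
    rw [util, util, Finset.sum_insert hiS, hdiag, zero_add]
  have hA : util w (π' i) i - util w (π i) i = util w S i - util w (π i) i := by
    rw [hval1 i hiiS, hud]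
  have hB : ∑ u ∈ S, (util w (π' u) u - util w (π u) u) = util w S i := by
    rw [show util w S i = ∑ u ∈ S, w u i by
      rw [util]; exact Finset.sum_congr rfl fun u _ => hsym i u]
    refine Finset.sum_congr rfl fun u hu => ?_
    rw [hval1 u (Finset.mem_insert_of_mem hu), hSeq u hu, util, util,
      Finset.sum_insert hiS]
    ring
  have hC : ∑ u ∈ (π i).erase i, (util w (π' u) u - util w (π u) u)
      = -(util w (π i) i) := by
    have h1 : ∀ u ∈ (π i).erase i,
        util w (π' u) u - util w (π u) u = -(w u i) := by
      intro u hu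
      have hπu : π u = π i := hcl i (Finset.mem_univ i) u (Finset.mem_erase.mp hu).2
      rw [hval2 u hu, hπu, util, util, ← Finset.add_sum_erase (π i) (fun v => w u v) hiπ]
      ring
    rw [Finset.sum_congr rfl h1, Finset.sum_neg_distrib]
    congr 1
    rw [show util w (π i) i = ∑ u ∈ (π i).erase i, w u i by
      rw [util, ← Finset.add_sum_erase (π i) (fun v => w i v) hiπ, hdiag i, zero_add]
      exact Finset.sum_congr rfl fun u _ => hsym i u]
  rw [hud] at hlt
  rw [hA, hB, hC]
  linarith
end

section
/- In a symmetric friend-oriented hedonic game, when a player i performs an IS-deviation from π(i) to a coalition S in a partition all of whose coalitions are cliques of the friendship graph, the number of within-coalition friendship pairs Φ(π) = ∑_{T ∈ π} |{ {u,v} ⊆ T : w(u,v) > 0 }| increases by exactly |S| - |π(i)| + 1, which is strictly positive. -/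
open Finset

/-- Twice the number of friendship pairs inside `T` (ordered pairs of friends). -/
def friendPairs {α : Type*} [DecidableEq α] [Fintype α] (w : α → α → ℤ)
    (T : Finset α) : ℕ :=
  (T.offDiag.filter fun p => 0 < w p.1 p.2).card

/-- Twice the potential `Φ(π)`: the number of within-coalition friendship pairs,
counted as ordered pairs. -/
def potF {α : Type*} [DecidableEq α] [Fintype α] (w : α → α → ℤ)
    (π : α → Finset α) : ℕ :=
  ∑ T ∈ (Finset.univ : Finset α).image π, friendPairs w T

/-! In a partition into cliques every player has `|π u| - 1` friends in its coalition, so the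
(doubled) potential is `∑ u, (|π u| - 1)`. Moving `i` from `T = π i` to `S` changes `|π u|` by
`+1` on `S`, by `-1` on `T \ {i}` and by `|S| + 1 - |T|` at `i`, a total of `2 (|S| - |T| + 1)`.
Since `S` accepts `i`, each `w j i ≥ 0` for `j ∈ S`, which in a friend-oriented game means
`w j i = n`: the new coalitions are again cliques, and `i`'s strict gain reads
`(|T| - 1) n < |S| n`. -/

namespace IsPartition

variable {α : Type*} [Fintype α] {σ : α → Finset α}

theorem mem_self_s10 (hσ : IsPartition univ σ) (u : α) : u ∈ σ u :=
  (hσ.1 u (mem_univ u)).1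

theorem eq_of_mem_s10 (hσ : IsPartition univ σ) {u v : α} (hv : v ∈ σ u) : σ v = σ u :=
  hσ.2 u (mem_univ u) v hv

theorem filter_eq [DecidableEq (Finset α)] (hσ : IsPartition univ σ) (u : α) :
    univ.filter (fun v => σ v = σ u) = σ u := by
  ext v
  simp only [mem_filter, mem_univ, true_and]
  exact ⟨fun h => h ▸ hσ.mem_self_s10 v, hσ.eq_of_mem_s10⟩

end IsPartition

theorem IsCoalitionOf.eq_of_mem_s10 {α : Type*} [Fintype α] {π : α → Finset α} {S : Finset α}
    (hS : IsCoalitionOf univ π S) (hπ : IsPartition univ π) {v : α} (hv : v ∈ S) :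
    π v = S := by
  rcases hS with rfl | ⟨j, -, rfl⟩
  · exact absurd hv (notMem_empty v)
  · exact hπ.eq_of_mem_s10 hv

section Potential

variable {α : Type*} [DecidableEq α] [Fintype α] {w : α → α → ℤ}

theorem friendPairs_of_isClique {T : Finset α} (hT : IsClique w T) :
    friendPairs w T = #T * (#T - 1) := by
  rw [friendPairs, filter_true_of_mem, offDiag_card, Nat.mul_sub_one]
  intro p hp
  obtain ⟨hp₁, hp₂, hne⟩ := mem_offDiag.mp hp
  exact (hT _ hp₁ _ hp₂ hne).2

theorem potF_add_card_of_isClique {σ : α → Finset α} (hσ : IsPartition univ σ)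
    (hcl : ∀ l, IsClique w (σ l)) :
    (potF w σ : ℤ) + Fintype.card α = ∑ u, (#(σ u) : ℤ) := by
  have hsum : potF w σ = ∑ u, (#(σ u) - 1) := by
    refine sum_image' _ fun u _ => ?_
    rw [hσ.filter_eq, friendPairs_of_isClique (hcl u), ← smul_eq_mul, ← sum_const]
    exact sum_congr rfl fun v hv => by rw [hσ.eq_of_mem_s10 hv]
  have hpos : ∀ u, 1 ≤ #(σ u) := fun u => card_pos.mpr ⟨u, hσ.mem_self_s10 u⟩
  rw [hsum, Nat.cast_sum, ← card_univ, card_eq_sum_ones, Nat.cast_sum, ← sum_add_distrib]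
  exact sum_congr rfl fun u _ => by push_cast [Nat.cast_sub (hpos u)]; ring

end Potential

section Friendship

variable {α : Type*} {w : α → α → ℤ} {i : α} {S T : Finset α}

theorem Friend.symm (hsym : ∀ u v, w u v = w v u) {u v : α} (h : Friend w u v) :
    Friend w v u :=
  ⟨h.1.symm, hsym v u ▸ h.2⟩

theorem IsClique.subset (hT : IsClique w T) (hST : S ⊆ T) : IsClique w S :=
  fun u hu v hv => hT u (hST hu) v (hST hv)

theorem IsClique.insert [DecidableEq α] (hS : IsClique w S) (hsym : ∀ u v, w u v = w v u)
    (hi : ∀ j ∈ S, Friend w i j) : IsClique w (insert i S) := by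
  intro u hu v hv huv
  rcases mem_insert.mp hu with rfl | huS <;> rcases mem_insert.mp hv with rfl | hvS
  · exact absurd rfl huv
  · exact hi v hvS
  · exact (hi u huS).symm hsym
  · exact hS u huS v hvS huv

variable [Fintype α]

theorem FriendOriented.eq_card_of_friend (hw : FriendOriented w) {u v : α} (h : Friend w u v) :
    w u v = Fintype.card α :=
  (hw.2.2 u v h.1).resolve_right fun h' => by linarith [h.2]

theorem FriendOriented.friend_of_nonneg (hw : FriendOriented w) {u v : α} (huv : u ≠ v)
    (h : 0 ≤ w u v) : Friend w u v := by
  refine ⟨huv, ?_⟩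
  rcases hw.2.2 u v huv with h' | h'
  · rw [h']
    exact_mod_cast Fintype.card_pos_iff.mpr ⟨u⟩
  · omega

theorem FriendOriented.util_eq [DecidableEq α] (hw : FriendOriented w)
    (hT : ∀ j ∈ T, j ≠ i → Friend w i j) : util w T i = #(T.erase i) * Fintype.card α := by
  rw [util, ← sum_erase T (hw.2.1 i), sum_congr rfl fun j hj =>
    hw.eq_card_of_friend (hT j (mem_of_mem_erase hj) (ne_of_mem_erase hj)), sum_const,
    nsmul_eq_mul]

end Friendship

section MovePlayer

variable {α : Type*} [DecidableEq α] {π : α → Finset α} {i : α} {S : Finset α}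

def movePlayer (π : α → Finset α) (i : α) (S : Finset α) (l : α) : Finset α :=
  if l ∈ insert i S then insert i S else if l ∈ π i then (π i).erase i else π l

theorem movePlayer_of_mem_insert {u : α} (hu : u ∈ insert i S) :
    movePlayer π i S u = insert i S :=
  if_pos hu

theorem movePlayer_of_notMem {u : α} (hu : u ∉ insert i S) (hu' : u ∉ π i) :
    movePlayer π i S u = π u := by
  simp only [movePlayer, hu, hu', if_false]

theorem mem_erase_of_notMem_insert {u : α} (hu : u ∉ insert i S) (hu' : u ∈ π i) :
    u ∈ (π i).erase i :=
  mem_erase.mpr ⟨by rintro rfl; exact hu (mem_insert_self _ _), hu'⟩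

theorem isClique_movePlayer {w : α → α → ℤ} (hsym : ∀ u v, w u v = w v u)
    (hcl : ∀ l, IsClique w (π l)) (hS : ∀ v ∈ S, π v = S) (hi : ∀ j ∈ S, Friend w i j)
    (l : α) : IsClique w (movePlayer π i S l) := by
  have hSc : IsClique w S := fun u hu => (hS u hu ▸ hcl u) u hu
  unfold movePlayer
  split_ifs
  exacts [hSc.insert hsym hi, (hcl i).subset (erase_subset i _), hcl l]

variable [Fintype α]

theorem notMem_insert_of_mem_erase (hπ : IsPartition univ π) (hS : ∀ v ∈ S, π v = S)
    (hiS : i ∉ S) {u : α} (hu : u ∈ (π i).erase i) : u ∉ insert i S := by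
  obtain ⟨hui, hu⟩ := mem_erase.mp hu
  intro hmem
  rcases mem_insert.mp hmem with rfl | huS
  · exact hui rfl
  · exact hiS (hS u huS ▸ hπ.eq_of_mem_s10 hu ▸ hπ.mem_self_s10 i)

theorem movePlayer_of_mem_erase (hπ : IsPartition univ π) (hS : ∀ v ∈ S, π v = S)
    (hiS : i ∉ S) {u : α} (hu : u ∈ (π i).erase i) :
    movePlayer π i S u = (π i).erase i := by
  simp only [movePlayer, notMem_insert_of_mem_erase hπ hS hiS hu, (mem_erase.mp hu).2,
    if_false, if_true]

theorem notMem_insert_of_mem_of_notMem (hπ : IsPartition univ π) (hS : ∀ v ∈ S, π v = S)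
    {a b : α} (ha : a ∉ insert i S) (ha' : a ∉ π i) (hb : b ∈ π a) :
    b ∉ insert i S ∧ b ∉ π i := by
  have hab : a ∈ π b := hπ.eq_of_mem_s10 hb ▸ hπ.mem_self_s10 a
  refine ⟨fun hbS => ?_, fun hbi => ha' (hπ.eq_of_mem_s10 hbi ▸ hab)⟩
  rcases mem_insert.mp hbS with rfl | hbS
  · exact ha' hab
  · exact ha (mem_insert_of_mem (hS b hbS ▸ hab))

theorem isPartition_movePlayer (hπ : IsPartition univ π) (hS : ∀ v ∈ S, π v = S)
    (hiS : i ∉ S) : IsPartition univ (movePlayer π i S) := by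
  refine ⟨fun u _ => ⟨?_, subset_univ _⟩, fun a _ b hb => ?_⟩
  · by_cases hu : u ∈ insert i S
    · rwa [movePlayer_of_mem_insert hu]
    by_cases hu' : u ∈ π i
    · have hue := mem_erase_of_notMem_insert hu hu'
      rwa [movePlayer_of_mem_erase hπ hS hiS hue]
    · rw [movePlayer_of_notMem hu hu']
      exact hπ.mem_self_s10 u
  · by_cases ha : a ∈ insert i S
    · rw [movePlayer_of_mem_insert ha] at hb ⊢
      exact movePlayer_of_mem_insert hb
    by_cases ha' : a ∈ π i
    · have hae := mem_erase_of_notMem_insert ha ha'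
      rw [movePlayer_of_mem_erase hπ hS hiS hae] at hb ⊢
      exact movePlayer_of_mem_erase hπ hS hiS hb
    · rw [movePlayer_of_notMem ha ha'] at hb ⊢
      obtain ⟨hbS, hbi⟩ := notMem_insert_of_mem_of_notMem hπ hS ha ha' hb
      rw [movePlayer_of_notMem hbS hbi]
      exact hπ.eq_of_mem_s10 hb

theorem sum_card_movePlayer (hπ : IsPartition univ π) (hS : ∀ v ∈ S, π v = S)
    (hiS : i ∉ S) :
    ∑ u, (#(movePlayer π i S u) : ℤ) = ∑ u, (#(π u) : ℤ) + 2 * (#S - #(π i) + 1) := by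
  set g : α → ℤ := fun u => #(movePlayer π i S u) - #(π u) with hg
  have hsupp : ∑ u ∈ insert i S ∪ (π i).erase i, g u = ∑ u, g u := by
    refine sum_subset (subset_univ _) fun u _ hu => ?_
    obtain ⟨huS, hue⟩ := not_or.mp (mem_union.not.mp hu)
    have hui : u ∉ π i := fun h => hue (mem_erase_of_notMem_insert huS h)
    simp only [hg]
    rw [movePlayer_of_notMem huS hui, sub_self]
  have hgS : ∀ u ∈ S, g u = 1 := fun u hu => by
    simp only [hg]
    rw [movePlayer_of_mem_insert (mem_insert_of_mem hu), hS u hu, card_insert_of_notMem hiS]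
    push_cast; ring
  have hgE : ∀ u ∈ (π i).erase i, g u = -1 := fun u hu => by
    simp only [hg]
    rw [movePlayer_of_mem_erase hπ hS hiS hu, hπ.eq_of_mem_s10 (mem_of_mem_erase hu),
      card_erase_of_mem (hπ.mem_self_s10 i), Nat.cast_sub (card_pos.mpr ⟨i, hπ.mem_self_s10 i⟩)]
    ring
  have hdisj : Disjoint (insert i S) ((π i).erase i) :=
    disjoint_right.mpr fun u hu => notMem_insert_of_mem_erase hπ hS hiS hu
  have htotal : ∑ u, g u = 2 * (#S - #(π i) + 1) := by
    rw [← hsupp, sum_union hdisj, sum_insert hiS, sum_congr rfl hgS, sum_congr rfl hgE]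
    simp only [hg]
    rw [movePlayer_of_mem_insert (mem_insert_self i S), card_insert_of_notMem hiS]
    simp only [sum_const, card_erase_of_mem (hπ.mem_self_s10 i), nsmul_eq_mul, mul_one, mul_neg]
    push_cast [Nat.cast_sub (card_pos.mpr ⟨i, hπ.mem_self_s10 i⟩)]
    ring
  rw [sum_sub_distrib] at htotal
  linarith

end MovePlayer

section Deviation

variable {α : Type*} [DecidableEq α] [Fintype α] {w : α → α → ℤ} {π : α → Finset α}
  {i : α} {S : Finset α}

theorem ISDev.friend_of_mem (hdev : ISDev w univ π i S) (hw : FriendOriented w) {j : α}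
    (hj : j ∈ S) : Friend w i j := by
  have hiS : i ∉ S := hdev.1.2.2.1
  have haccept := hdev.2 j hj
  rw [util, util, sum_insert hiS] at haccept
  exact (hw.friend_of_nonneg (ne_of_mem_of_not_mem hj hiS) (by linarith)).symm hw.1

theorem ISDev.card_le (hdev : ISDev w univ π i S) (hw : FriendOriented w)
    (hcl : IsClique w (π i)) (hi : i ∈ π i) : #(π i) ≤ #S := by
  have hgain := hdev.1.2.2.2
  rw [hw.util_eq fun j hj hji => hcl i hi j hj hji.symm,
    hw.util_eq fun j hj hji => hdev.friend_of_mem hw ((mem_insert.mp hj).resolve_left hji),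
    erase_insert hdev.1.2.2.1] at hgain
  have hlt : #((π i).erase i) < #S := by
    exact_mod_cast lt_of_mul_lt_mul_right hgain (Nat.cast_nonneg _)
  rw [card_erase_of_mem hi] at hlt
  omega

end Deviation

/-- In a symmetric friend-oriented game whose current partition consists
of cliques, an IS-deviation of `i` to `S` increases the number of within-coalition
friendship pairs by exactly `|S| - |π i| + 1 > 0`. -/
theorem is_deviation_potential_friend_oriented {α : Type*} [DecidableEq α] [Fintype α]
    (w : α → α → ℤ) (hw : FriendOriented w)
    (π : α → Finset α) (hπ : IsPartition (Finset.univ : Finset α) π)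
    (hcliques : ∀ l : α, IsClique w (π l))
    (i : α) (S : Finset α) (hdev : ISDev w Finset.univ π i S)
    (π' : α → Finset α)
    (hπ' : π' = fun l =>
      if l ∈ insert i S then insert i S else if l ∈ π i then (π i).erase i else π l) :
    (potF w π' : ℤ) = potF w π + 2 * ((S.card : ℤ) - (π i).card + 1) ∧
      0 < (S.card : ℤ) - (π i).card + 1 := by
  obtain rfl : π' = movePlayer π i S := hπ'
  have hiS : i ∉ S := hdev.1.2.2.1
  have hS : ∀ v ∈ S, π v = S := fun v hv => hdev.1.1.eq_of_mem_s10 hπ hv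
  have hfriend : ∀ j ∈ S, Friend w i j := fun j hj => hdev.friend_of_mem hw hj
  have hpot := potF_add_card_of_isClique hπ hcliques
  have hpot' := potF_add_card_of_isClique (w := w) (isPartition_movePlayer hπ hS hiS)
    (isClique_movePlayer hw.1 hcliques hS hfriend)
  have hsum := sum_card_movePlayer hπ hS hiS
  have hle := hdev.card_le hw (hcliques i) (hπ.mem_self_s10 i)
  exact ⟨by linarith, by omega⟩
end

section
/- In the (non-symmetric) friend-oriented hedonic game with four players a, b, c, d, where a, b, c mutually consider each other and d to be friends, while d's only friend is c, there is no partition that is both individually stable and IR-robust under deletion of a single player. -/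
open Finset

/-- The non-symmetric friend-oriented game on `{a, b, c, d}` (as `0, 1, 2, 3`): players
`a`, `b`, `c` consider everyone else a friend, while `d`'s only friend is `c`. -/
def wNonSym : Fin 4 → Fin 4 → ℤ := fun i j =>
  if i = j then 0 else if i = 3 ∧ j ≠ 2 then -1 else 4

section DecInst
variable {α : Type*} [DecidableEq α] [Fintype α]

instance (V : Finset α) (π : α → Finset α) : Decidable (IsPartition V π) := by
  unfold IsPartition; infer_instance
instance (V : Finset α) (π : α → Finset α) (S : Finset α) :
    Decidable (IsCoalitionOf V π S) := by unfold IsCoalitionOf; infer_instance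
instance (w : α → α → ℤ) (V : Finset α) (π : α → Finset α) (i : α) (S : Finset α) :
    Decidable (NSDev w V π i S) := by unfold NSDev; infer_instance
instance (w : α → α → ℤ) (V : Finset α) (π : α → Finset α) (i : α) (S : Finset α) :
    Decidable (ISDev w V π i S) := by unfold ISDev; infer_instance
instance (w : α → α → ℤ) (V : Finset α) (π : α → Finset α) :
    Decidable (IndStable w V π) := by unfold IndStable; infer_instance
instance (w : α → α → ℤ) (V : Finset α) (π : α → Finset α) :
    Decidable (IndRational w V π) := by unfold IndRational; infer_instance
instance (St : Finset α → (α → Finset α) → Prop)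
    [∀ V π, Decidable (St V π)] (V : Finset α) (π : α → Finset α) (k : ℕ) :
    Decidable (Robust St V π k) := by unfold Robust; infer_instance

end DecInst

/-- In this non-symmetric friend-oriented game, no partition is both
individually stable and IR-robust under deletion of a single player. -/
theorem no_is_ir_robust_nonsym :
    ¬ ∃ π : Fin 4 → Finset (Fin 4), IsPartition (Finset.univ : Finset (Fin 4)) π ∧
      IndStable wNonSym Finset.univ π ∧
      Robust (IndRational wNonSym) Finset.univ π 1 := by
  rintro ⟨π, ⟨hmem, hcoal⟩, hstab, _, hrob⟩
  have h3mem : (3 : Fin 4) ∈ π 3 := (hmem 3 (by decide)).1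
  -- Step 1: after deleting player 2, player 3 must be alone.
  have hIR3 : 0 ≤ util wNonSym (π 3 \ {2}) 3 :=
    hrob {2} (Finset.subset_univ _) (by decide) 3 (by decide)
  have hsub : π 3 \ {2} ∈ ({0, 1, 3} : Finset (Fin 4)).powerset := by
    rw [Finset.mem_powerset]
    intro x hx
    have hx2 : x ≠ 2 := (Finset.mem_sdiff.mp hx).2 ∘ Finset.mem_singleton.mpr
    clear hx; revert hx2; revert x; decide
  have key : ∀ S ∈ ({0, 1, 3} : Finset (Fin 4)).powerset,
      (3 : Fin 4) ∈ S → 0 ≤ util wNonSym S 3 → S = {3} := by decide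
  have h3' : π 3 \ {2} = {3} :=
    key _ hsub (Finset.mem_sdiff.mpr ⟨h3mem, by decide⟩) hIR3
  have hsub3 : π 3 ⊆ {2, 3} := by
    intro x hx
    by_cases hx2 : x = 2
    · subst hx2; decide
    · have : x ∈ π 3 \ {2} := Finset.mem_sdiff.mpr ⟨hx, by simpa using hx2⟩
      rw [h3'] at this
      simp only [Finset.mem_singleton] at this
      subst this; decide
  have key2 : ∀ S ∈ ({2, 3} : Finset (Fin 4)).powerset, (3 : Fin 4) ∈ S →
      S = {3} ∨ S = {2, 3} := by decide
  rcases key2 _ (Finset.mem_powerset.mpr hsub3) h3mem with h3e | h3e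
  · -- Case A : π 3 = {3}.  Player 3 has an IS-deviation to π 2.
    have h2mem : (2 : Fin 4) ∈ π 2 := (hmem 2 (by decide)).1
    have h3not : (3 : Fin 4) ∉ π 2 := by
      intro h
      have := hcoal 2 (by decide) 3 h
      rw [h3e] at this
      have : (2 : Fin 4) ∈ ({3} : Finset (Fin 4)) := this ▸ h2mem
      exact absurd this (by decide)
    have hsub2 : π 2 ∈ ({0, 1, 2} : Finset (Fin 4)).powerset := by
      rw [Finset.mem_powerset]
      intro x hx
      have hx3 : x ≠ 3 := fun h => h3not (h ▸ hx)
      clear hx; revert hx3; revert x; decide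
    have keyA : ∀ S ∈ ({0, 1, 2} : Finset (Fin 4)).powerset, (2 : Fin 4) ∈ S →
        (0 < util wNonSym (insert 3 S) 3 ∧ (3 : Fin 4) ∉ S ∧
          ∀ j ∈ S, util wNonSym S j ≤ util wNonSym (insert 3 S) j) := by decide
    obtain ⟨hu, hni, hacc⟩ := keyA _ hsub2 h2mem
    exact hstab 3 (by decide) (π 2)
      ⟨⟨Or.inr ⟨2, by decide, rfl⟩,
        by rw [h3e]; intro h; exact absurd (h ▸ h2mem) (by decide),
        hni, by rw [h3e]; simpa [util, wNonSym] using hu⟩, hacc⟩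
  · -- Case B : π 3 = {2, 3}
    have h2e : π 2 = {2, 3} := by
      have := hcoal 3 (by decide) 2 (by rw [h3e]; decide)
      rw [this, h3e]
    have h0mem : (0 : Fin 4) ∈ π 0 := (hmem 0 (by decide)).1
    have hnot : ∀ x : Fin 4, x ≠ 0 → π x = {2, 3} ∨ π x = {3} → x ∉ π 0 := by
      intro x hx0 hxe hx
      have := hcoal 0 (by decide) x hx
      have h0 : (0 : Fin 4) ∈ π x := this ▸ h0mem
      rcases hxe with h | h <;> rw [h] at h0 <;> exact absurd h0 (by decide)
    have hsub0 : π 0 ∈ ({0, 1} : Finset (Fin 4)).powerset := by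
      rw [Finset.mem_powerset]
      intro x hx
      have hx2 : x ≠ 2 := by rintro rfl; exact hnot 2 (by decide) (Or.inl h2e) hx
      have hx3 : x ≠ 3 := by rintro rfl; exact hnot 3 (by decide) (Or.inl h3e) hx
      clear hx; revert hx2 hx3; revert x; decide
    have keyB : ∀ S ∈ ({0, 1} : Finset (Fin 4)).powerset, (0 : Fin 4) ∈ S →
        S = {0} ∨ S = {0, 1} := by decide
    rcases keyB _ hsub0 h0mem with h0e | h0e
    · -- π 0 = {0}; then π 1 = {1} and player 0 deviates to {1}.
      have h1mem : (1 : Fin 4) ∈ π 1 := (hmem 1 (by decide)).1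
      have h1sub : π 1 ⊆ {1} := by
        intro x hx
        have hne : ∀ y : Fin 4, y ≠ 1 → π y ≠ π 1 → True := fun _ _ _ => trivial
        have hx0 : x ≠ 0 := by
          rintro rfl
          have := hcoal 1 (by decide) 0 hx
          have : (1 : Fin 4) ∈ π 0 := this ▸ h1mem
          rw [h0e] at this; exact absurd this (by decide)
        have hx2 : x ≠ 2 := by
          rintro rfl
          have := hcoal 1 (by decide) 2 hx
          have : (1 : Fin 4) ∈ π 2 := this ▸ h1mem
          rw [h2e] at this; exact absurd this (by decide)
        have hx3 : x ≠ 3 := by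
          rintro rfl
          have := hcoal 1 (by decide) 3 hx
          have : (1 : Fin 4) ∈ π 3 := this ▸ h1mem
          rw [h3e] at this; exact absurd this (by decide)
        clear hx; revert hx0 hx2 hx3; revert x; decide
      have h1e : π 1 = {1} := Finset.Subset.antisymm h1sub (by
        intro x hx
        simp only [Finset.mem_singleton] at hx
        subst hx; exact h1mem)
      refine hstab 0 (by decide) (π 1)
        ⟨⟨Or.inr ⟨1, by decide, rfl⟩, ?_, ?_, ?_⟩, ?_⟩
      · rw [h1e, h0e]; decide
      · rw [h1e]; decide
      · rw [h1e, h0e]; decide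
      · rw [h1e]; decide
    · -- π 0 = {0, 1}; player 2 deviates to {0, 1}.
      refine hstab 2 (by decide) (π 0)
        ⟨⟨Or.inr ⟨0, by decide, rfl⟩, ?_, ?_, ?_⟩, ?_⟩
      · rw [h0e, h2e]; decide
      · rw [h0e]; decide
      · rw [h0e, h2e]; decide
      · rw [h0e]; decide
end
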